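/- arXiv:2310.11091 — 2 statements merged into one kernel-verified Lean document; each statement's English description precedes it below -/
import Mathlib

section
/- Let $r,q\ge 1$, $n=qr+1$, and let $1\le m_1,\dots,m_{r-1}\le q$. The permutation $v_{\underline{m}}=\prod_{i=1}^{r-1}(s_{(i-1)q+m_i}s_{(i-1)q+m_i-1}\cdots s_{i+2}s_{i+1})$ of $S_n$ satisfies $v_{\underline{m}}(1)=1$ and $v_{\underline{m}}(j)=(j-2)q+m_{j-1}+1$ for all $2\le j\le r$. -/
/-- The descending word `s_hi s_{hi-1} ⋯ s_lo` of simple transpositions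
`s_i = (i, i+1)`, multiplied left to right. -/
def descWord (hi lo : ℕ) : Equiv.Perm ℕ :=
  ((List.range (hi + 1 - lo)).map (fun t => Equiv.swap (hi - t) (hi - t + 1))).prod

/-- `v_{\underline m} = ∏_{i=1}^{r-1} (s_{(i-1)q+m_i} s_{(i-1)q+m_i-1} ⋯ s_{i+2} s_{i+1})`,
factors multiplied left to right. -/
def vmPerm (r q : ℕ) (m : ℕ → ℕ) : Equiv.Perm ℕ :=
  ((List.range (r - 1)).map (fun i' => descWord (i' * q + m (i' + 1)) (i' + 2))).prod

/-!
The word `s_hi ⋯ s_lo` sends `lo` to `hi + 1` and fixes every point outside `[lo, hi + 1]`.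
The `i`-th factor of `v_m` (counting from `0`) fixes every point below `i + 2`, so `j` is fixed
by the factors after the `(j - 2)`-th, is sent to `(j - 2) q + m_{j-1} + 1` by that factor, and
this point lies above the supports `[i + 2, i q + m_{i+1} + 1]` of all the earlier factors
because `m_{i+1} ≤ q`.
-/

open Equiv

theorem Equiv.Perm.list_prod_apply_eq_self {α : Type*} {l : List (Perm α)} {x : α}
    (h : ∀ σ ∈ l, σ x = x) : l.prod x = x :=
  MulAction.mem_stabilizer_iff.mp <| (MulAction.stabilizer (Perm α) x).list_prod_mem
    fun σ hσ => MulAction.mem_stabilizer_iff.mpr (h σ hσ)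

theorem descWord_of_lt {hi lo : ℕ} (h : hi < lo) : descWord hi lo = 1 := by
  simp [descWord, Nat.sub_eq_zero_of_le h]

theorem descWord_succ {hi lo : ℕ} (h : lo ≤ hi + 1) :
    descWord (hi + 1) lo = swap (hi + 1) (hi + 2) * descWord hi lo := by
  rw [descWord, show hi + 1 + 1 - lo = hi + 1 - lo + 1 by omega, List.range_succ_eq_map,
    List.map_cons, List.prod_cons, List.map_map]
  simp only [descWord, Nat.sub_zero, Function.comp_def, Nat.succ_sub_succ]

theorem descWord_apply_of_lt_or_lt {hi lo x : ℕ} (hx : x < lo ∨ hi + 1 < x) :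
    descWord hi lo x = x := by
  refine Perm.list_prod_apply_eq_self fun σ hσ => ?_
  obtain ⟨t, ht, rfl⟩ := List.mem_map.mp hσ
  rw [List.mem_range] at ht
  exact swap_apply_of_ne_of_ne (by omega) (by omega)

theorem descWord_apply_lo {hi lo : ℕ} (h : lo ≤ hi + 1) : descWord hi lo lo = hi + 1 := by
  induction hi with
  | zero =>
    interval_cases lo
    · simp [descWord]
    · rw [descWord_of_lt zero_lt_one]; rfl
  | succ hi ih =>
    obtain h | rfl := Nat.lt_or_eq_of_le h
    · rw [descWord_succ (by omega), Perm.mul_apply, ih (by omega), swap_apply_left]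
    · rw [descWord_of_lt (Nat.lt_succ_self _)]; rfl

theorem vmPerm_apply_general (r q : ℕ) (hq : 0 < q) (m : ℕ → ℕ)
    (hm : ∀ i : ℕ, 1 ≤ i → i ≤ r - 1 → 1 ≤ m i ∧ m i ≤ q) :
    vmPerm r q m 1 = 1 ∧
      ∀ j : ℕ, 2 ≤ j → j ≤ r → vmPerm r q m j = (j - 2) * q + m (j - 1) + 1 := by
  have fixes_small {x i : ℕ} (hx : x < i + 2) :
      descWord (i * q + m (i + 1)) (i + 2) x = x :=
    descWord_apply_of_lt_or_lt (.inl hx)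
  refine ⟨Perm.list_prod_apply_eq_self <| List.forall_mem_map.mpr fun i _ => fixes_small (by omega),
    fun j hj2 hjr => ?_⟩
  obtain ⟨k, rfl⟩ : ∃ k, j = k + 2 := ⟨j - 2, by omega⟩
  obtain ⟨hmk, -⟩ := hm (k + 1) (by omega) (by omega)
  -- factors `i < k`, then factor `k`, then factors `i > k`
  rw [vmPerm, show r - 1 = k + 1 + (r - 1 - (k + 1)) by omega, List.range_add, List.range_succ,
    List.map_append, List.map_append, List.map_map, List.prod_append, List.prod_append,
    List.map_singleton, List.prod_singleton, Perm.mul_apply, Perm.mul_apply,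
    Perm.list_prod_apply_eq_self (x := k + 2), descWord_apply_lo, Perm.list_prod_apply_eq_self]
  · simp
  · refine List.forall_mem_map.mpr fun i hi => descWord_apply_of_lt_or_lt (.inr ?_)
    rw [List.mem_range] at hi
    obtain ⟨-, hmi⟩ := hm (i + 1) (by omega) (by omega)
    have : i * q + q ≤ k * q := by simpa [add_mul] using Nat.mul_le_mul_right q hi
    omega
  · have := Nat.le_mul_of_pos_right k hq
    omega
  · exact List.forall_mem_map.mpr fun i _ => fixes_small (i := k + 1 + i) (by omega)

theorem vmPerm_apply (r q : ℕ) (hr : 0 < r) (hq : 0 < q) (m : ℕ → ℕ)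
    (hm : ∀ i : ℕ, 1 ≤ i → i ≤ r - 1 → 1 ≤ m i ∧ m i ≤ q) :
    vmPerm r q m 1 = 1 ∧
      ∀ j : ℕ, 2 ≤ j → j ≤ r → vmPerm r q m j = (j - 2) * q + m (j - 1) + 1 :=
  vmPerm_apply_general r q hq m hm
end

section
/- Let $r,q\ge 1$, $n=qr+1$, $k\ge 1$, and let $T$ be a $(kn)\times r$ array with entries in $\{1,\dots,n\}$ such that rows are strictly increasing, columns weakly increasing, every value appears exactly $rk$ times, $T(kn,j)\le jq+1$ for all $j$, and $T(1,j)\ge(j-2)q+m_{j-1}+1$ for $2\le j\le r$ with fixed $1\le m_i\le q$. Define the $n\times r$ subarray $T'$ by taking row $m$ of $T'$ to be row $k(m-1)+1$ of $T$ for $1\le m\le r$, and row $km$ of $T$ for $r+1\le m\le n$. Then $T'$ again has strictly increasing rows, weakly increasing columns, every value in $\{1,\dots,n\}$ appearing exactly $r$ times, $T'(n,j)\le jq+1$ for all $j$, and $T'(1,j)\ge (j-2)q+m_{j-1}+1$ for $2\le j\le r$. -/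
/-!
Let `A_j(t)` be the number of entries `≤ t` in column `j` of `T`. Since columns are weakly
increasing, the entries `≤ t` in column `j` of `T'` are those in the selected rows with index
`≤ A_j(t)`; there are `⌈A_j(t) / k⌉` of them when `A_j(t) ≤ kr` and `⌊A_j(t) / k⌋` when
`A_j(t) ≥ kr`. The other conditions pass to `T'` directly, and the counting condition amounts to
these numbers summing to `tr` over the columns, for every `t ≤ n`.

Write `t = cq + e + 1` with `e < q`. The bounds on the last and first rows of `T` make the columns
`≤ c` full and the columns `≥ c + 3` empty; as `T` has `tkr` entries `≤ t`, `x = A_{c+1}(t)` and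
`y = A_{c+2}(t)` satisfy `x + y = k ((e + 1) r - c)`. Either `y = 0` (when `e = 0`), or, comparing
with the threshold `(c + 1) q + 1`, `y ≤ kr ≤ x`; in both cases `⌊x / k⌋ + ⌈y / k⌉ = (e + 1) r - c`.
-/

open Finset

theorem card_filter_le_add_one {α : Type*} (s : Finset α) (g : α → ℕ) (t : ℕ) :
    #{x ∈ s | g x ≤ t + 1} = #{x ∈ s | g x ≤ t} + #{x ∈ s | g x = t + 1} := by
  classical
  rw [← card_union_of_disjoint (disjoint_filter.2 fun _ _ h h' => by omega), ← filter_or]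
  exact congrArg card (filter_congr fun _ _ => by omega)

theorem card_filter_le_eq_mul {α : Type*} {s : Finset α} {g : α → ℕ} {n R : ℕ}
    (hpos : ∀ x ∈ s, 1 ≤ g x) (heq : ∀ t, 1 ≤ t → t ≤ n → #{x ∈ s | g x = t} = R) :
    ∀ t ≤ n, #{x ∈ s | g x ≤ t} = t * R := by
  intro t ht
  induction t with
  | zero => simpa using fun x hx => Nat.one_le_iff_ne_zero.1 (hpos x hx)
  | succ t ih => rw [card_filter_le_add_one, ih (by omega), heq _ (by omega) ht]; ring

theorem card_filter_eq_of_card_filter_le {α : Type*} {s : Finset α} {g : α → ℕ} {n R : ℕ}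
    (hle : ∀ t ≤ n, #{x ∈ s | g x ≤ t} = t * R) {t : ℕ} (ht₁ : 1 ≤ t) (ht : t ≤ n) :
    #{x ∈ s | g x = t} = R := by
  obtain ⟨t, rfl⟩ := Nat.exists_eq_add_of_le' ht₁
  have := card_filter_le_add_one s g t
  rw [hle _ ht, hle _ (by omega)] at this
  linarith

theorem card_filter_prod_eq_sum {α β : Type*} (s : Finset α) (t : Finset β) (p : α → β → Prop)
    [∀ a b, Decidable (p a b)] :
    #{x ∈ s ×ˢ t | p x.1 x.2} = ∑ b ∈ t, #{a ∈ s | p a b} := by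
  simp only [card_filter, sum_product_right]

theorem Finset.sum_comp_eq_comp_sum_of_single {ι M N : Type*} [AddCommMonoid M] [AddCommMonoid N]
    {s : Finset ι} {g : ι → M} (i₀ : ι) (hg : ∀ i ∈ s, i ≠ i₀ → g i = 0) {f : M → N}
    (hf : f 0 = 0) :
    ∑ i ∈ s, f (g i) = f (∑ i ∈ s, g i) := by
  by_cases hi : i₀ ∈ s
  · rw [sum_eq_single_of_mem i₀ hi hg, sum_eq_single_of_mem i₀ hi fun i hi hne => by
      rw [hg i hi hne, hf]]
  · rw [sum_eq_zero fun i hi' => by rw [hg i hi' (by rintro rfl; exact hi hi'), hf],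
      sum_eq_zero fun i hi' => hg i hi' (by rintro rfl; exact hi hi'), hf]

theorem MonotoneOn.le_iff_le_card_filter {β : Type*} [LinearOrder β] {f : ℕ → β} {N : ℕ}
    (hf : MonotoneOn f (Set.Icc 1 N)) {i : ℕ} (hi : i ∈ Icc 1 N) (t : β) :
    f i ≤ t ↔ i ≤ #{i ∈ Icc 1 N | f i ≤ t} := by
  rw [mem_Icc] at hi
  constructor
  · intro hfi
    calc i = #(Icc 1 i) := by simp
      _ ≤ _ := card_le_card fun x hx => by
        rw [mem_Icc] at hx
        exact mem_filter.2 ⟨mem_Icc.2 ⟨hx.1, hx.2.trans hi.2⟩,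
          (hf ⟨hx.1, by omega⟩ hi hx.2).trans hfi⟩
  · intro hile
    by_contra! hfi
    have : #{i ∈ Icc 1 N | f i ≤ t} ≤ #(Icc 1 (i - 1)) := card_le_card fun x hx => by
      rw [mem_filter, mem_Icc] at hx
      refine mem_Icc.2 ⟨hx.1.1, ?_⟩
      by_contra! hxi
      exact hfi.not_ge ((hf hi hx.1 (by omega)).trans hx.2)
    rw [Nat.card_Icc] at this
    omega

theorem Nat.div_add_ceilDiv_of_add_eq_mul {k x y S : ℕ} (hk : 0 < k) (h : x + y = k * S) :
    x / k + y ⌈/⌉ k = S := by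
  obtain ⟨u, v, hv, rfl⟩ : ∃ u v, v < k ∧ x = v + k * u :=
    ⟨x / k, x % k, Nat.mod_lt x hk, (Nat.mod_add_div x k).symm⟩
  have huS : u ≤ S := Nat.le_of_mul_le_mul_left (by omega) hk
  have hy : y + k - 1 = (k - 1 - v) + k * (S - u) := by
    rw [Nat.mul_sub]; have := Nat.mul_le_mul_left k huS; omega
  rw [Nat.ceilDiv_eq_add_pred_div, hy, Nat.add_mul_div_left _ _ hk, Nat.add_mul_div_left _ _ hk,
    Nat.div_eq_of_lt hv, Nat.div_eq_of_lt (by omega)]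
  omega

theorem sum_Icc_one_eq_mul_add_sum_Icc {g : ℕ → ℕ} {c r w : ℕ} (hc : c ≤ r)
    (hg : ∀ j ∈ Icc 1 c, g j = w) :
    ∑ j ∈ Icc 1 r, g j = c * w + ∑ j ∈ Icc (c + 1) r, g j := by
  have hI : ∀ m, Icc 1 m = Ioc 0 m := fun m => Icc_add_one_left_eq_Ioc 0 m
  rw [hI, ← sum_Ioc_consecutive g (Nat.zero_le c) hc, ← hI, Icc_add_one_left_eq_Ioc,
    sum_congr rfl hg, sum_const, Nat.card_Icc, smul_eq_mul, Nat.add_sub_cancel]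

theorem card_filter_comp_le_eq {β : Type*} [LinearOrder β] {f : ℕ → β} {g : ℕ → ℕ} {N n : ℕ}
    (hf : MonotoneOn f (Set.Icc 1 N)) (hg : ∀ i ∈ Icc 1 n, g i ∈ Icc 1 N) (t : β) :
    #{i ∈ Icc 1 n | f (g i) ≤ t} = #{i ∈ Icc 1 n | g i ≤ #{i ∈ Icc 1 N | f i ≤ t}} :=
  congrArg card (filter_congr fun i hi => hf.le_iff_le_card_filter (hg i hi) t)

def selectedRow (k r i : ℕ) : ℕ := if i ≤ r then k * (i - 1) + 1 else k * i

def selectedCount (k r n a : ℕ) : ℕ := #{i ∈ Icc 1 n | selectedRow k r i ≤ a}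

section SelectedRows

variable {k r n : ℕ}

theorem selectedRow_mono (hk : 0 < k) : Monotone (selectedRow k r) := by
  refine monotone_nat_of_le_succ fun i => ?_
  rcases i with _ | i
  · unfold selectedRow; split_ifs <;> omega
  · simp only [selectedRow, Nat.add_sub_cancel]
    split_ifs <;> nlinarith

theorem selectedRow_mem_Icc (hk : 0 < k) {i : ℕ} (hi : i ∈ Icc 1 n) :
    selectedRow k r i ∈ Icc 1 (k * n) := by
  obtain ⟨i, rfl⟩ := Nat.exists_eq_add_of_le' (mem_Icc.1 hi).1
  rw [mem_Icc] at hi ⊢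
  simp only [selectedRow, Nat.add_sub_cancel]
  split_ifs <;> constructor <;> nlinarith

theorem selectedCount_of_le_mul (hk : 0 < k) (hrn : r ≤ n) {a : ℕ} (ha : a ≤ k * r) :
    selectedCount k r n a = a ⌈/⌉ k := by
  suffices {i ∈ Icc 1 n | selectedRow k r i ≤ a} = Icc 1 (a ⌈/⌉ k) by
    rw [selectedCount, this, Nat.card_Icc, Nat.add_sub_cancel]
  have hceil : a ⌈/⌉ k ≤ r := (ceilDiv_le_iff_le_mul hk).2 ha
  ext i
  rcases i with _ | i
  · simp
  have hi : i + 1 ≤ a ⌈/⌉ k ↔ k * i < a := by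
    rw [Nat.add_one_le_iff, ← not_le, ceilDiv_le_iff_le_mul hk, not_le]
  rw [mem_filter, mem_Icc, mem_Icc, hi, selectedRow, Nat.add_sub_cancel]
  split_ifs with hir
  · omega
  · have : k * r < k * (i + 1) := Nat.mul_lt_mul_of_pos_left (by omega) hk
    omega

theorem selectedCount_of_mul_le (hk : 0 < k) {a : ℕ} (ha : k * r ≤ a) (han : a ≤ k * n) :
    selectedCount k r n a = a / k := by
  suffices {i ∈ Icc 1 n | selectedRow k r i ≤ a} = Icc 1 (a / k) by
    rw [selectedCount, this, Nat.card_Icc, Nat.add_sub_cancel]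
  ext i
  rcases i with _ | i
  · simp
  rw [mem_filter, mem_Icc, mem_Icc, Nat.le_div_iff_mul_le hk, selectedRow, Nat.add_sub_cancel,
    mul_comm _ k]
  split_ifs with hir
  · have hkr : k * (i + 1) ≤ k * r := Nat.mul_le_mul_left k hir
    have : i + 1 ≤ n := Nat.le_of_mul_le_mul_left (hkr.trans (ha.trans han)) hk
    rw [Nat.mul_succ] at hkr ⊢
    omega
  · have : k * (i + 1) ≤ k * n ↔ i + 1 ≤ n := Nat.mul_le_mul_left_iff hk
    omega

theorem selectedCount_mul (hk : 0 < k) (hrn : r ≤ n) {S : ℕ} (hS : S ≤ n) :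
    selectedCount k r n (k * S) = S := by
  rcases le_total S r with hSr | hrS
  · rw [selectedCount_of_le_mul hk hrn (Nat.mul_le_mul_left k hSr)]
    simpa using Nat.div_add_ceilDiv_of_add_eq_mul hk (zero_add (k * S))
  · rw [selectedCount_of_mul_le hk (Nat.mul_le_mul_left k hrS) (Nat.mul_le_mul_left k hS),
      Nat.mul_div_cancel_left S hk]

theorem selectedCount_zero (hk : 0 < k) (hrn : r ≤ n) : selectedCount k r n 0 = 0 := by
  simpa using selectedCount_mul hk hrn (Nat.zero_le n)

theorem selectedCount_add_selectedCount (hk : 0 < k) (hrn : r ≤ n) {x y S : ℕ}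
    (hxy : x + y = k * S) (hS : S ≤ n) (hx : x ≤ k * n) (hy : y = 0 ∨ y ≤ k * r ∧ k * r ≤ x) :
    selectedCount k r n x + selectedCount k r n y = S := by
  rcases hy with rfl | ⟨hy, hrx⟩
  · rw [add_zero] at hxy
    rw [hxy, selectedCount_mul hk hrn hS, selectedCount_zero hk hrn, add_zero]
  · rw [selectedCount_of_mul_le hk hrx hx, selectedCount_of_le_mul hk hrn hy]
    exact Nat.div_add_ceilDiv_of_add_eq_mul hk hxy

end SelectedRows

/-- `a j t` stands for the number of entries `≤ t` in column `j` of a `kn × r` tableau. -/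
structure IsColumnCountProfile (k q r n : ℕ) (a : ℕ → ℕ → ℕ) : Prop where
  mono : ∀ j, Monotone (a j)
  le : ∀ j t, a j t ≤ k * n
  full : ∀ j ∈ Icc 1 r, a j (j * q + 1) = k * n
  empty : ∀ j ∈ Icc 2 r, a j ((j - 2) * q + 1) = 0
  sum : ∀ t ≤ n, ∑ j ∈ Icc 1 r, a j t = t * (r * k)

namespace IsColumnCountProfile

variable {k q r n : ℕ} {a : ℕ → ℕ → ℕ}

theorem eq_of_le (h : IsColumnCountProfile k q r n a) {j t : ℕ} (hj : j ∈ Icc 1 r)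
    (ht : j * q + 1 ≤ t) : a j t = k * n :=
  le_antisymm (h.le j t) (h.full j hj ▸ h.mono j ht)

theorem eq_zero_of_add_two_le (h : IsColumnCountProfile k q r n a) {c j t : ℕ}
    (hj : j ∈ Icc (c + 2) r) (ht : t ≤ c * q + 1) : a j t = 0 := by
  have hj' := mem_Icc.1 hj
  have : c * q ≤ (j - 2) * q := Nat.mul_le_mul_right q (by omega)
  exact Nat.eq_zero_of_le_zero
    (h.empty j (mem_Icc.2 ⟨by omega, hj'.2⟩) ▸ h.mono j (by omega : t ≤ (j - 2) * q + 1))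

theorem sum_comp_eq_mul_add_sum_Icc (h : IsColumnCountProfile k q r n a) (g : ℕ → ℕ)
    {c t : ℕ} (hc : c ≤ r) (ht : c * q + 1 ≤ t) :
    ∑ j ∈ Icc 1 r, g (a j t) = c * g (k * n) + ∑ j ∈ Icc (c + 1) r, g (a j t) :=
  sum_Icc_one_eq_mul_add_sum_Icc hc fun _ hj => by
    rw [h.eq_of_le (mem_Icc.2 ⟨(mem_Icc.1 hj).1, (mem_Icc.1 hj).2.trans hc⟩)
      ((Nat.add_le_add_right (Nat.mul_le_mul_right q (mem_Icc.1 hj).2) 1).trans ht)]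

theorem sum_tail_le (h : IsColumnCountProfile k q r n a) (hn : n = q * r + 1) {c t : ℕ}
    (hc : c + 1 ≤ r) (ht : t ≤ (c + 1) * q + 1) :
    ∑ j ∈ Icc (c + 2) r, a j t ≤ k * (r - (c + 1)) := by
  obtain ⟨d, hd⟩ := Nat.exists_eq_add_of_le hc
  have hsum := h.sum ((c + 1) * q + 1) (by rw [hn]; nlinarith)
  rw [← sum_congr rfl fun j _ => id_eq (a j _), h.sum_comp_eq_mul_add_sum_Icc id hc le_rfl,
    show ((c + 1) * q + 1) * (r * k) = (c + 1) * (k * n) + k * d by rw [hn, hd]; ring] at hsum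
  calc ∑ j ∈ Icc (c + 2) r, a j t ≤ ∑ j ∈ Icc (c + 2) r, a j ((c + 1) * q + 1) :=
        sum_le_sum fun j _ => h.mono j ht
    _ = k * (r - (c + 1)) := by
      rw [show r - (c + 1) = d by omega]; exact Nat.add_left_cancel hsum

theorem sum_selectedCount_eq_of_lt (h : IsColumnCountProfile k q r n a) (hk : 0 < k)
    (hn : n = q * r + 1) {c e : ℕ} (hcr : c < r) (he : e < q) :
    ∑ j ∈ Icc 1 r, selectedCount k r n (a j (c * q + e + 1)) = (c * q + e + 1) * r := by
  have hrn : r ≤ n := by rw [hn]; nlinarith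
  set t := c * q + e + 1
  obtain ⟨S, hcS⟩ : ∃ S, (e + 1) * r = c + S :=
    Nat.exists_eq_add_of_le (hcr.le.trans (Nat.le_mul_of_pos_left r (Nat.succ_pos e)))
  have htr : t * r = c * n + S := by
    rw [show t * r = c * (q * r) + (e + 1) * r by ring, hcS, hn]; ring
  have hSn : S ≤ n := by
    have : (e + 1) * r ≤ q * r := Nat.mul_le_mul_right r he
    omega
  have hsplit : ∀ g : ℕ → ℕ, ∑ j ∈ Icc 1 r, g (a j t)
      = c * g (k * n) + (g (a (c + 1) t) + ∑ j ∈ Icc (c + 2) r, g (a j t)) := fun g => by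
    rw [h.sum_comp_eq_mul_add_sum_Icc g hcr.le (by omega), ← add_sum_Ioc_eq_sum_Icc hcr,
      ← Icc_add_one_left_eq_Ioc]
    rfl
  set x := a (c + 1) t
  set y := ∑ j ∈ Icc (c + 2) r, a j t
  have hxy : x + y = k * S := by
    have hsum := h.sum t (by nlinarith)
    rw [← sum_congr rfl fun j _ => id_eq (a j t), hsplit id,
      show t * (r * k) = c * (k * n) + k * S by rw [← mul_assoc, htr]; ring] at hsum
    exact Nat.add_left_cancel hsum
  have hy : y = 0 ∨ y ≤ k * r ∧ k * r ≤ x := by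
    rcases Nat.eq_zero_or_pos e with rfl | he₀
    · exact .inl (sum_eq_zero fun j hj => h.eq_zero_of_add_two_le hj le_rfl)
    · have hyle := h.sum_tail_le hn hcr (show t ≤ (c + 1) * q + 1 by nlinarith)
      have : k * (r + (r - (c + 1))) ≤ k * S := by
        have : 2 * r ≤ (e + 1) * r := Nat.mul_le_mul_right r (by omega)
        exact Nat.mul_le_mul_left k (by omega)
      rw [mul_add] at this
      exact .inr ⟨hyle.trans (Nat.mul_le_mul_left k (by omega)), by omega⟩
  have hsingle : ∀ j ∈ Icc (c + 2) r, j ≠ c + 2 → a j t = 0 := fun j hj hne => by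
    have hj' := mem_Icc.1 hj
    exact h.eq_zero_of_add_two_le (c := c + 1) (mem_Icc.2 ⟨by omega, hj'.2⟩) (by nlinarith)
  rw [hsplit (selectedCount k r n), selectedCount_mul hk hrn le_rfl,
    Finset.sum_comp_eq_comp_sum_of_single (c + 2) hsingle (selectedCount_zero hk hrn),
    selectedCount_add_selectedCount hk hrn hxy hSn (h.le _ _) hy, htr]

theorem sum_selectedCount_eq (h : IsColumnCountProfile k q r n a) (hk : 0 < k) (hq : 0 < q)
    (hn : n = q * r + 1) {t : ℕ} (ht : t ≤ n) :
    ∑ j ∈ Icc 1 r, selectedCount k r n (a j t) = t * r := by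
  have hrn : r ≤ n := by rw [hn]; nlinarith
  rcases Nat.eq_zero_or_pos t with rfl | ht₀
  · have h0 : ∀ j ∈ Icc 1 r, a j 0 = 0 :=
      sum_eq_zero_iff.1 (by simpa using h.sum 0 (Nat.zero_le n))
    rw [sum_eq_zero fun j hj => by rw [h0 j hj, selectedCount_zero hk hrn], zero_mul]
  obtain ⟨c, e, he, rfl⟩ : ∃ c e, e < q ∧ t = c * q + e + 1 :=
    ⟨(t - 1) / q, (t - 1) % q, Nat.mod_lt _ hq, by have := Nat.div_add_mod' (t - 1) q; omega⟩
  rcases lt_or_ge c r with hcr | hrc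
  · exact h.sum_selectedCount_eq_of_lt hk hn hcr he
  have htn : c * q + e + 1 = n := le_antisymm ht (by rw [hn]; nlinarith)
  rw [sum_congr rfl fun j hj => by
      rw [h.eq_of_le hj (by nlinarith [mem_Icc.1 hj]), selectedCount_mul hk hrn le_rfl],
    sum_const, Nat.card_Icc, htn, smul_eq_mul, Nat.add_sub_cancel, mul_comm]

end IsColumnCountProfile

def colCount (T : ℕ → ℕ → ℕ) (N j t : ℕ) : ℕ := #{i ∈ Icc 1 N | T i j ≤ t}

section Tableau

variable {T : ℕ → ℕ → ℕ} {N j t : ℕ}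

theorem colCount_eq_of_le (hT : MonotoneOn (T · j) (Set.Icc 1 N)) (ht : T N j ≤ t) :
    colCount T N j t = N := by
  rw [colCount, filter_true_of_mem, Nat.card_Icc, Nat.add_sub_cancel]
  intro i hi
  rw [mem_Icc] at hi
  exact (hT ⟨hi.1, hi.2⟩ ⟨hi.1.trans hi.2, le_rfl⟩ hi.2).trans ht

theorem colCount_eq_zero (hT : MonotoneOn (T · j) (Set.Icc 1 N)) (ht : t < T 1 j) :
    colCount T N j t = 0 := by
  rw [colCount, card_eq_zero, filter_eq_empty_iff]
  intro i hi
  rw [mem_Icc] at hi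
  exact (ht.trans_le (hT ⟨le_rfl, hi.1.trans hi.2⟩ ⟨hi.1, hi.2⟩ hi.1)).not_ge

theorem isColumnCountProfile_colCount {k q r n : ℕ}
    (hcol : ∀ j ∈ Icc 1 r, MonotoneOn (T · j) (Set.Icc 1 (k * n)))
    (hpos : ∀ i ∈ Icc 1 (k * n), ∀ j ∈ Icc 1 r, 1 ≤ T i j)
    (hcount : ∀ t, 1 ≤ t → t ≤ n → #{p ∈ Icc 1 (k * n) ×ˢ Icc 1 r | T p.1 p.2 = t} = r * k)
    (hlast : ∀ j ∈ Icc 1 r, T (k * n) j ≤ j * q + 1)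
    (hfirst : ∀ j ∈ Icc 2 r, (j - 2) * q + 1 < T 1 j) :
    IsColumnCountProfile k q r n (colCount T (k * n)) where
  mono j _ _ hst := card_le_card (monotone_filter_right _ fun _ _ h => h.trans hst)
  le j t := (card_filter_le _ _).trans (by simp)
  full j hj := colCount_eq_of_le (hcol j hj) (hlast j hj)
  empty j hj := by
    have hj' := mem_Icc.1 hj
    exact colCount_eq_zero (hcol j (mem_Icc.2 ⟨by omega, hj'.2⟩)) (hfirst j hj)
  sum t ht := by
    simp only [colCount]
    rw [← card_filter_prod_eq_sum (Icc 1 (k * n)) (Icc 1 r) fun i j => T i j ≤ t]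
    exact card_filter_le_eq_mul (fun p hp => hpos p.1 (mem_product.1 hp).1 p.2 (mem_product.1 hp).2)
      hcount t ht

theorem card_filter_selectedRow_le {k q r n s : ℕ} (hk : 0 < k) (hq : 0 < q) (hn : n = q * r + 1)
    (hcol : ∀ j ∈ Icc 1 r, MonotoneOn (T · j) (Set.Icc 1 (k * n)))
    (hT : IsColumnCountProfile k q r n (colCount T (k * n))) (hs : s ≤ n) :
    #{p ∈ Icc 1 n ×ˢ Icc 1 r | T (selectedRow k r p.1) p.2 ≤ s} = s * r := by
  rw [card_filter_prod_eq_sum (p := fun i j => T (selectedRow k r i) j ≤ s),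
    sum_congr rfl fun j hj =>
      card_filter_comp_le_eq (hcol j hj) (fun _ => selectedRow_mem_Icc hk) s]
  exact hT.sum_selectedCount_eq hk hq hn hs

end Tableau

theorem subtableau_degree_one_general
    (r q : ℕ) (hq : 0 < q) (n : ℕ) (hn : n = q * r + 1)
    (k : ℕ) (hk : 0 < k)
    (m : ℕ → ℕ) (hm : ∀ i : ℕ, 1 ≤ i → i ≤ r - 1 → 1 ≤ m i ∧ m i ≤ q)
    (T : ℕ → ℕ → ℕ)
    (hentries : ∀ i j : ℕ, 1 ≤ i → i ≤ k * n → 1 ≤ j → j ≤ r → 1 ≤ T i j ∧ T i j ≤ n)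
    (hrows : ∀ i j : ℕ, 1 ≤ i → i ≤ k * n → 1 ≤ j → j < r → T i j < T i (j + 1))
    (hcols : ∀ i j : ℕ, 1 ≤ i → i < k * n → 1 ≤ j → j ≤ r → T i j ≤ T (i + 1) j)
    (hcount : ∀ t : ℕ, 1 ≤ t → t ≤ n →
      (((Finset.Icc 1 (k * n)) ×ˢ (Finset.Icc 1 r)).filter
        (fun p => T p.1 p.2 = t)).card = r * k)
    (hlast : ∀ j : ℕ, 1 ≤ j → j ≤ r → T (k * n) j ≤ j * q + 1)
    (hfirst : ∀ j : ℕ, 2 ≤ j → j ≤ r → (j - 2) * q + m (j - 1) + 1 ≤ T 1 j) :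
    ∀ T' : ℕ → ℕ → ℕ,
      (∀ i j : ℕ, T' i j = if i ≤ r then T (k * (i - 1) + 1) j else T (k * i) j) →
      ((∀ i j : ℕ, 1 ≤ i → i ≤ n → 1 ≤ j → j ≤ r → 1 ≤ T' i j ∧ T' i j ≤ n) ∧
       (∀ i j : ℕ, 1 ≤ i → i ≤ n → 1 ≤ j → j < r → T' i j < T' i (j + 1)) ∧
       (∀ i j : ℕ, 1 ≤ i → i < n → 1 ≤ j → j ≤ r → T' i j ≤ T' (i + 1) j) ∧
       (∀ t : ℕ, 1 ≤ t → t ≤ n →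
         (((Finset.Icc 1 n) ×ˢ (Finset.Icc 1 r)).filter
           (fun p => T' p.1 p.2 = t)).card = r) ∧
       (∀ j : ℕ, 1 ≤ j → j ≤ r → T' n j ≤ j * q + 1) ∧
       (∀ j : ℕ, 2 ≤ j → j ≤ r → (j - 2) * q + m (j - 1) + 1 ≤ T' 1 j)) := by
  intro T' hT'
  have hrn : r < n := by rw [hn]; nlinarith
  have hT'sel : ∀ i j, T' i j = T (selectedRow k r i) j := fun i j => by
    rw [hT', selectedRow]; split_ifs <;> rfl
  have hsel : ∀ {i}, 1 ≤ i → i ≤ n → 1 ≤ selectedRow k r i ∧ selectedRow k r i ≤ k * n :=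
    fun hi hin => mem_Icc.1 (selectedRow_mem_Icc hk (mem_Icc.2 ⟨hi, hin⟩))
  have hcol : ∀ j ∈ Icc 1 r, MonotoneOn (T · j) (Set.Icc 1 (k * n)) := fun j hj =>
    monotoneOn_of_le_add_one Set.ordConnected_Icc fun i _ hi hi' =>
      hcols i j hi.1 hi'.2 (mem_Icc.1 hj).1 (mem_Icc.1 hj).2
  have hprofile : IsColumnCountProfile k q r n (colCount T (k * n)) :=
    isColumnCountProfile_colCount hcol
      (fun i hi j hj =>
        (hentries i j (mem_Icc.1 hi).1 (mem_Icc.1 hi).2 (mem_Icc.1 hj).1 (mem_Icc.1 hj).2).1)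
      hcount (fun j hj => hlast j (mem_Icc.1 hj).1 (mem_Icc.1 hj).2)
      fun j hj => by
        have hj' := mem_Icc.1 hj
        have := hfirst j hj'.1 hj'.2
        have := (hm (j - 1) (by omega) (by omega)).1
        omega
  have hcum : ∀ s ≤ n, #{p ∈ Icc 1 n ×ˢ Icc 1 r | T' p.1 p.2 ≤ s} = s * r := fun s hs => by
    simpa only [hT'sel] using card_filter_selectedRow_le hk hq hn hcol hprofile hs
  refine ⟨fun i j hi hin hj hjr => ?_, fun i j hi hin hj hjr => ?_, fun i j hi hin hj hjr => ?_,
    fun t ht htn => card_filter_eq_of_card_filter_le hcum ht htn, fun j hj hjr => ?_,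
    fun j hj hjr => ?_⟩
  · rw [hT'sel]; exact hentries _ j (hsel hi hin).1 (hsel hi hin).2 hj hjr
  · rw [hT'sel, hT'sel]; exact hrows _ j (hsel hi hin).1 (hsel hi hin).2 hj hjr
  · rw [hT'sel, hT'sel]
    exact hcol j (mem_Icc.2 ⟨hj, hjr⟩) (hsel hi hin.le) (hsel (by omega) hin)
      (selectedRow_mono hk (Nat.le_succ i))
  · rw [hT', if_neg hrn.not_ge]; exact hlast j hj hjr
  · rw [hT', if_pos (by omega)]; exact hfirst j hj hjr

/-- Theorem 3.8 of the paper (key step of `R₁`-generation): from a degree-`k`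
balanced standard tableau supported on `X^{v_m}_{w_{r,n}}`, the row-selection
rule (row `k(m-1)+1` for `m ≤ r`, row `km` for `m > r`) extracts a degree-one
such tableau. -/
theorem subtableau_degree_one
    (r q : ℕ) (hr : 0 < r) (hq : 0 < q) (n : ℕ) (hn : n = q * r + 1)
    (k : ℕ) (hk : 0 < k)
    (m : ℕ → ℕ) (hm : ∀ i : ℕ, 1 ≤ i → i ≤ r - 1 → 1 ≤ m i ∧ m i ≤ q)
    (T : ℕ → ℕ → ℕ)
    (hentries : ∀ i j : ℕ, 1 ≤ i → i ≤ k * n → 1 ≤ j → j ≤ r → 1 ≤ T i j ∧ T i j ≤ n)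
    (hrows : ∀ i j : ℕ, 1 ≤ i → i ≤ k * n → 1 ≤ j → j < r → T i j < T i (j + 1))
    (hcols : ∀ i j : ℕ, 1 ≤ i → i < k * n → 1 ≤ j → j ≤ r → T i j ≤ T (i + 1) j)
    (hcount : ∀ t : ℕ, 1 ≤ t → t ≤ n →
      (((Finset.Icc 1 (k * n)) ×ˢ (Finset.Icc 1 r)).filter
        (fun p => T p.1 p.2 = t)).card = r * k)
    (hlast : ∀ j : ℕ, 1 ≤ j → j ≤ r → T (k * n) j ≤ j * q + 1)
    (hfirst : ∀ j : ℕ, 2 ≤ j → j ≤ r → (j - 2) * q + m (j - 1) + 1 ≤ T 1 j) :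
    ∀ T' : ℕ → ℕ → ℕ,
      (∀ i j : ℕ, T' i j = if i ≤ r then T (k * (i - 1) + 1) j else T (k * i) j) →
      ((∀ i j : ℕ, 1 ≤ i → i ≤ n → 1 ≤ j → j ≤ r → 1 ≤ T' i j ∧ T' i j ≤ n) ∧
       (∀ i j : ℕ, 1 ≤ i → i ≤ n → 1 ≤ j → j < r → T' i j < T' i (j + 1)) ∧
       (∀ i j : ℕ, 1 ≤ i → i < n → 1 ≤ j → j ≤ r → T' i j ≤ T' (i + 1) j) ∧
       (∀ t : ℕ, 1 ≤ t → t ≤ n →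
         (((Finset.Icc 1 n) ×ˢ (Finset.Icc 1 r)).filter
           (fun p => T' p.1 p.2 = t)).card = r) ∧
       (∀ j : ℕ, 1 ≤ j → j ≤ r → T' n j ≤ j * q + 1) ∧
       (∀ j : ℕ, 2 ≤ j → j ≤ r → (j - 2) * q + m (j - 1) + 1 ≤ T' 1 j)) :=
  subtableau_degree_one_general r q hq n hn k hk m hm T hentries hrows hcols hcount hlast hfirst
end
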